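/- (Theorem 3, deterministic form.) Let A ∈ ℝ^{m×n}, b ∈ ℝ^m, A x_⋆ = b, and x ∈ ℝ^n. Let τ_1,…,τ_η be pairwise disjoint nonempty subsets of {1,…,m}; for each j let t_j ∈ τ_j attain max_{i∈τ_j}(b_i − A_i x)², and set J = {t_1,…,t_η}. Let h ∈ {1,…,η} be an index for which ‖A_{τ_h} x − b_{τ_h}‖_∞² = min_{1≤j≤η} ‖A_{τ_j} x − b_{τ_j}‖_∞². If A_J ≠ 0 and x₊ = P_{S_J}(x) is the orthogonal projection of x onto S_J = {y : A_J y = b_J}, then ‖x₊ − x_⋆‖₂² ≤ (1 − η · λ_min(A_{τ_h}ᵀ A_{τ_h}) / (|τ_h| · λ_max(A_Jᵀ A_J))) · ‖x − x_⋆‖₂². -/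

import Mathlib

open Matrix Finset

noncomputable def lambdaMax {N : Type*} [Fintype N] [DecidableEq N]
    {M : Matrix N N ℝ} (hM : M.IsHermitian) : ℝ := ⨆ i, hM.eigenvalues i

noncomputable def lambdaMin {N : Type*} [Fintype N] [DecidableEq N]
    {M : Matrix N N ℝ} (hM : M.IsHermitian) : ℝ := ⨅ i, hM.eigenvalues i

/-- The row submatrix `A_I` of `A` with rows indexed by the finite set `I`. -/
def rowSub {m n : ℕ} (A : Matrix (Fin m) (Fin n) ℝ) (I : Finset (Fin m)) :
    Matrix {i // i ∈ I} (Fin n) ℝ := A.submatrix Subtype.val id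

/-- The Gram matrix `A_Iᵀ * A_I`. -/
def gram {m n : ℕ} (A : Matrix (Fin m) (Fin n) ℝ) (I : Finset (Fin m)) :
    Matrix (Fin n) (Fin n) ℝ := (rowSub A I)ᵀ * rowSub A I

lemma quad_decomp {N : Type*} [Fintype N] [DecidableEq N] {M : Matrix N N ℝ}
    (hM : M.IsHermitian) (v : N → ℝ) :
    v ⬝ᵥ M.mulVec v =
      ∑ i, hM.eigenvalues i * (vecMul v (hM.eigenvectorUnitary : Matrix N N ℝ) i)^2 := by
  set U := (hM.eigenvectorUnitary : Matrix N N ℝ) with hU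
  have hstar : (star U).mulVec v = vecMul v U := by
    ext i; simp [mulVec, vecMul, dotProduct, mul_comm]
  conv_lhs => rw [hM.spectral_theorem, Unitary.conjStarAlgAut_apply]
  rw [← mulVec_mulVec, ← mulVec_mulVec, hstar, dotProduct_mulVec, ← hU]
  simp [dotProduct, Matrix.mulVec_diagonal, pow_two]
  exact Finset.sum_congr rfl fun i _ => by ring

lemma sumsq_decomp {N : Type*} [Fintype N] [DecidableEq N] {M : Matrix N N ℝ}
    (hM : M.IsHermitian) (v : N → ℝ) :
    v ⬝ᵥ v = ∑ i, (vecMul v (hM.eigenvectorUnitary : Matrix N N ℝ) i)^2 := by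
  set U := (hM.eigenvectorUnitary : Matrix N N ℝ) with hU
  have hstar : (star U).mulVec v = vecMul v U := by
    ext i; simp [mulVec, vecMul, dotProduct, mul_comm]
  have h1 : U * star U = 1 := Unitary.coe_mul_star_self hM.eigenvectorUnitary
  have key : vecMul v U ⬝ᵥ vecMul v U = v ⬝ᵥ v := by
    nth_rewrite 2 [← hstar]
    rw [dotProduct_mulVec, vecMul_vecMul, h1, vecMul_one]
  rw [← key]
  simp [dotProduct, pow_two]

lemma quad_le_lambdaMax {N : Type*} [Fintype N] [DecidableEq N] {M : Matrix N N ℝ}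
    (hM : M.IsHermitian) (v : N → ℝ) :
    v ⬝ᵥ M.mulVec v ≤ lambdaMax hM * (v ⬝ᵥ v) := by
  rw [quad_decomp hM, sumsq_decomp hM, Finset.mul_sum]
  refine Finset.sum_le_sum fun i _ => ?_
  have hle : hM.eigenvalues i ≤ lambdaMax hM :=
    le_ciSup (Set.Finite.bddAbove (Set.finite_range hM.eigenvalues)) i
  nlinarith [sq_nonneg (vecMul v (hM.eigenvectorUnitary : Matrix N N ℝ) i)]

lemma lambdaMin_le_quad {N : Type*} [Fintype N] [DecidableEq N] {M : Matrix N N ℝ}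
    (hM : M.IsHermitian) (v : N → ℝ) :
    lambdaMin hM * (v ⬝ᵥ v) ≤ v ⬝ᵥ M.mulVec v := by
  rw [quad_decomp hM, sumsq_decomp hM, Finset.mul_sum]
  refine Finset.sum_le_sum fun i _ => ?_
  have hle : lambdaMin hM ≤ hM.eigenvalues i :=
    ciInf_le (Set.Finite.bddBelow (Set.finite_range hM.eigenvalues)) i
  nlinarith [sq_nonneg (vecMul v (hM.eigenvectorUnitary : Matrix N N ℝ) i)]

lemma gram_quad {m n : ℕ} (A : Matrix (Fin m) (Fin n) ℝ) (I : Finset (Fin m)) (v : Fin n → ℝ) :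
    v ⬝ᵥ (gram A I).mulVec v = ∑ i ∈ I, (A.mulVec v i)^2 := by
  rw [_root_.gram, ← mulVec_mulVec, dotProduct_mulVec, vecMul_transpose]
  rw [← Finset.sum_coe_sort I (fun i => (A.mulVec v i)^2)]
  simp [rowSub, mulVec, dotProduct, pow_two]

lemma gram_posSemidef {m n : ℕ} (A : Matrix (Fin m) (Fin n) ℝ) (I : Finset (Fin m))
    (hG : (gram A I).IsHermitian) : (gram A I).PosSemidef := by
  refine Matrix.PosSemidef.of_dotProduct_mulVec_nonneg hG fun v => ?_
  have := gram_quad A I v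
  simp only [star_trivial] at *
  rw [this]
  positivity

lemma lambdaMin_nonneg {m n : ℕ} (A : Matrix (Fin m) (Fin n) ℝ) (I : Finset (Fin m))
    (hG : (gram A I).IsHermitian) : 0 ≤ lambdaMin hG :=
  Real.iInf_nonneg fun i => (gram_posSemidef A I hG).eigenvalues_nonneg i

lemma lambdaMax_pos {m n : ℕ} (A : Matrix (Fin m) (Fin n) ℝ) (I : Finset (Fin m))
    (hAI : rowSub A I ≠ 0) (hG : (gram A I).IsHermitian) : 0 < lambdaMax hG := by
  have : ∃ k l, rowSub A I k l ≠ 0 := by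
    by_contra hc
    push_neg at hc
    exact hAI (by ext k l; simpa using hc k l)
  obtain ⟨k, l, hkl⟩ := this
  set v : Fin n → ℝ := Pi.single l 1 with hv
  have hAv : A.mulVec v k.val = A k.val l := by
    simp [hv, mulVec, dotProduct, Pi.single_apply, mul_comm]
  have hquad : 0 < v ⬝ᵥ (gram A I).mulVec v := by
    rw [gram_quad]
    have h1 : (A.mulVec v k.val)^2 ≤ ∑ i ∈ I, (A.mulVec v i)^2 :=
      Finset.single_le_sum (f := fun i => (A.mulVec v i)^2) (fun i _ => sq_nonneg _) k.2
    have h2 : 0 < (A.mulVec v k.val)^2 := by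
      rw [hAv]
      exact lt_of_le_of_ne (sq_nonneg _) (Ne.symm (pow_ne_zero 2 hkl))
    linarith
  have hvv : v ⬝ᵥ v = 1 := by simp [hv, dotProduct, Pi.single_apply]
  have := quad_le_lambdaMax hG v
  rw [hvv, mul_one] at this
  linarith

lemma inner_zero_of_min {E : Type*} [NormedAddCommGroup E] [InnerProductSpace ℝ E] (u w : E)
    (hmin : ∀ t : ℝ, ‖u‖ ≤ ‖u - t • w‖) : (inner ℝ u w : ℝ) = 0 := by
  by_cases hw : w = 0
  · simp [hw]
  have hwn : (0:ℝ) < ‖w‖ := norm_pos_iff.mpr hw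
  have hw2 : (0:ℝ) < ‖w‖^2 := by positivity
  set c : ℝ := inner ℝ u w with hc
  have key : ∀ t : ℝ, 0 ≤ -(2*t*c) + t^2 * ‖w‖^2 := by
    intro t
    have h := hmin t
    have h2 : ‖u‖^2 ≤ ‖u - t•w‖^2 := pow_le_pow_left₀ (norm_nonneg _) h 2
    rw [norm_sub_sq_real, real_inner_smul_right, norm_smul] at h2
    simp only [Real.norm_eq_abs] at h2
    nlinarith [sq_abs t]
  have h3 := key (c / ‖w‖^2)
  have hne : (‖w‖:ℝ)^2 ≠ 0 := ne_of_gt hw2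
  have e : -(2*(c / ‖w‖^2)*c) + (c / ‖w‖^2)^2 * ‖w‖^2 = -(c^2/‖w‖^2) := by
    field_simp; ring
  rw [e] at h3
  have h5 : c^2/‖w‖^2 ≤ 0 := by linarith
  have h6 : c^2 ≤ 0 := by
    calc c^2 = (c^2/‖w‖^2) * ‖w‖^2 := by field_simp
    _ ≤ 0 := mul_nonpos_of_nonpos_of_nonneg h5 (le_of_lt hw2)
  nlinarith [sq_nonneg c]

lemma euclid_norm_sq_eq_dot {n : ℕ} (v : EuclideanSpace ℝ (Fin n)) :
    ‖v‖^2 = (fun i => v i) ⬝ᵥ (fun i => v i) := by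
  rw [← real_inner_self_eq_norm_sq]
  simp only [PiLp.inner_apply, dotProduct, RCLike.inner_apply, conj_trivial]

/-- Theorem 3 of the paper (deterministic form): one BSKM2 step satisfies
`‖x₊ − x⋆‖² ≤ (1 − η λ_min(A_{τ_h}ᵀ A_{τ_h})/(|τ_h| λ_max(A_Jᵀ A_J))) ‖x − x⋆‖²`,
where `h` attains `min_j ‖A_{τ_j} x − b_{τ_j}‖_∞²`. -/
theorem bskm2_step
    {m n η : ℕ} (A : Matrix (Fin m) (Fin n) ℝ) (b : Fin m → ℝ)
    (xs : EuclideanSpace ℝ (Fin n)) (hxs : A.mulVec xs = b)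
    (x : EuclideanSpace ℝ (Fin n))
    (τ : Fin η → Finset (Fin m))
    (hne : ∀ j, (τ j).Nonempty)
    (hdisj : ∀ j₁ j₂, j₁ ≠ j₂ → Disjoint (τ j₁) (τ j₂))
    (t : Fin η → Fin m)
    (ht_mem : ∀ j, t j ∈ τ j)
    (ht_max : ∀ j, (b (t j) - A.mulVec x (t j)) ^ 2 =
      (τ j).sup' (hne j) fun i => (b i - A.mulVec x i) ^ 2)
    (J : Finset (Fin m)) (hJ : J = Finset.image t Finset.univ)
    (h : Fin η)
    (hh_min : ∀ j, ((τ h).sup' (hne h) fun i => (A.mulVec x i - b i) ^ 2) ≤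
      (τ j).sup' (hne j) fun i => (A.mulVec x i - b i) ^ 2)
    (hAJ : rowSub A J ≠ 0)
    (hG : (gram A J).IsHermitian)
    (hGh : (gram A (τ h)).IsHermitian)
    (xp : EuclideanSpace ℝ (Fin n))
    (hp_mem : ∀ i ∈ J, A.mulVec xp i = b i)
    (hp_min : ∀ y : EuclideanSpace ℝ (Fin n),
      (∀ i ∈ J, A.mulVec y i = b i) → ‖x - xp‖ ≤ ‖x - y‖) :
    ‖xp - xs‖ ^ 2 ≤
      (1 - (η : ℝ) * lambdaMin hGh / (((τ h).card : ℝ) * lambdaMax hG)) *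
        ‖x - xs‖ ^ 2 := by
  classical
  -- residual
  set r : Fin m → ℝ := fun i => A.mulVec x i - b i with hr
  have hxsb : ∀ i, A.mulVec xs i = b i := fun i => congrFun hxs i
  -- t is injective
  have htinj : Function.Injective t := by
    intro j₁ j₂ hteq
    by_contra hne12
    exact (Finset.disjoint_left.mp (hdisj j₁ j₂ hne12) (ht_mem j₁)) (hteq ▸ ht_mem j₂)
  -- orthogonality: ⟪x - xp, xs - xp⟫ = 0
  have horth : (inner ℝ (x - xp) (xs - xp) : ℝ) = 0 := by
    apply inner_zero_of_min
    intro s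
    have hy : ∀ i ∈ J, A.mulVec (xp + s • (xs - xp)) i = b i := by
      intro i hi
      have h1 := hp_mem i hi
      have h2 := hxsb i
      simp only [mulVec, dotProduct] at h1 h2 ⊢
      have expand : ∀ j, A i j * (xp + s • (xs - xp)) j
          = A i j * xp j + s * (A i j * xs j - A i j * xp j) := by
        intro j
        simp only [PiLp.add_apply, PiLp.smul_apply, PiLp.sub_apply, smul_eq_mul]
        ring
      rw [Finset.sum_congr rfl fun j _ =>
        (id (expand j) : A i j * (xp.ofLp + s • (xs.ofLp - xp.ofLp)) j = _)]
      rw [Finset.sum_add_distrib, ← Finset.mul_sum, Finset.sum_sub_distrib, h1, h2]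
      ring
    have := hp_min _ hy
    calc ‖x - xp‖ ≤ ‖x - (xp + s • (xs - xp))‖ := this
      _ = ‖x - xp - s • (xs - xp)‖ := by rw [sub_add_eq_sub_sub]
  -- Pythagoras
  have hpyth : ‖xp - xs‖^2 = ‖x - xs‖^2 - ‖x - xp‖^2 := by
    have e1 : xp - xs = (x - xs) - (x - xp) := by abel
    have e2 : (inner ℝ (x - xs) (x - xp) : ℝ) = ‖x - xp‖^2 := by
      have e3 : x - xs = (x - xp) - (xs - xp) := by abel
      have horth' : (inner ℝ (xs - xp) (x - xp) : ℝ) = 0 := by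
        rw [real_inner_comm]; exact horth
      rw [e3, inner_sub_left, real_inner_self_eq_norm_sq, horth']; ring
    rw [e1, norm_sub_sq_real, e2]; ring
  -- notation
  set α := lambdaMin hGh with hα
  set β := lambdaMax hG with hβ
  have hα0 : 0 ≤ α := lambdaMin_nonneg A (τ h) hGh
  have hβ0 : 0 < β := lambdaMax_pos A J hAJ hG
  have hk0 : 0 < ((τ h).card : ℝ) := by
    exact_mod_cast Finset.card_pos.mpr (hne h)
  set R := ‖x - xs‖^2 with hR
  set D := ‖x - xp‖^2 with hD
  have hR0 : 0 ≤ R := sq_nonneg _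
  -- vectors as plain functions
  set w1 : Fin n → ℝ := fun i => x i - xp i with hw1
  set w2 : Fin n → ℝ := fun i => x i - xs i with hw2
  have hDdot : D = w1 ⬝ᵥ w1 := by
    rw [hD, euclid_norm_sq_eq_dot]
    congr 1
  have hRdot : R = w2 ⬝ᵥ w2 := by
    rw [hR, euclid_norm_sq_eq_dot]
    congr 1
  -- residual identities
  have hmul1 : ∀ i ∈ J, A.mulVec w1 i = r i := by
    intro i hi
    have h1 := hp_mem i hi
    simp only [mulVec, dotProduct, hr] at h1 ⊢
    rw [Finset.sum_congr rfl (fun j _ => by rw [hw1]; ring_nf :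
        ∀ j ∈ Finset.univ, A i j * w1 j = A i j * x j - A i j * xp j)]
    rw [Finset.sum_sub_distrib, h1]
  have hmul2 : ∀ i, A.mulVec w2 i = r i := by
    intro i
    have h2 := hxsb i
    simp only [mulVec, dotProduct, hr] at h2 ⊢
    rw [Finset.sum_congr rfl (fun j _ => by rw [hw2]; ring_nf :
        ∀ j ∈ Finset.univ, A i j * w2 j = A i j * x j - A i j * xs j)]
    rw [Finset.sum_sub_distrib, h2]
  -- quadratic form bounds
  have hub : ∑ i ∈ J, r i ^ 2 ≤ β * D := by
    have := quad_le_lambdaMax hG w1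
    rw [gram_quad] at this
    rw [hDdot]
    calc ∑ i ∈ J, r i ^ 2 = ∑ i ∈ J, (A.mulVec w1 i)^2 :=
          Finset.sum_congr rfl fun i hi => by rw [hmul1 i hi]
      _ ≤ β * (w1 ⬝ᵥ w1) := this
  have hlb : α * R ≤ ∑ i ∈ (τ h), r i ^ 2 := by
    have := lambdaMin_le_quad hGh w2
    rw [gram_quad] at this
    rw [hRdot]
    calc α * (w2 ⬝ᵥ w2) ≤ ∑ i ∈ (τ h), (A.mulVec w2 i)^2 := this
      _ = ∑ i ∈ (τ h), r i ^ 2 := Finset.sum_congr rfl fun i _ => by rw [hmul2 i]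
  -- sup over τ h
  set S := (τ h).sup' (hne h) (fun i => r i ^ 2) with hS
  -- sum over J ≥ η * S
  have hJsum : (η : ℝ) * S ≤ ∑ i ∈ J, r i ^ 2 := by
    rw [hJ, Finset.sum_image (fun j₁ _ j₂ _ he => htinj he)]
    have hterm : ∀ j : Fin η, S ≤ r (t j) ^ 2 := by
      intro j
      have e1 : r (t j) ^ 2 = (b (t j) - A.mulVec x (t j)) ^ 2 := by rw [hr]; ring
      have e2 : ((τ j).sup' (hne j) fun i => (b i - A.mulVec x i) ^ 2)
          = (τ j).sup' (hne j) fun i => (A.mulVec x i - b i) ^ 2 :=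
        Finset.sup'_congr (hne j) rfl fun i _ => by ring
      have e3 : S = (τ h).sup' (hne h) fun i => (A.mulVec x i - b i) ^ 2 := by
        rw [hS]
      rw [e1, ht_max j, e2, e3]
      exact hh_min j
    calc (η : ℝ) * S = ∑ _j : Fin η, S := by
          rw [Finset.sum_const, Finset.card_univ, Fintype.card_fin, nsmul_eq_mul]
      _ ≤ ∑ j : Fin η, r (t j) ^ 2 := Finset.sum_le_sum fun j _ => hterm j
  -- sum over τ h ≤ card * S
  have hτsum : ∑ i ∈ (τ h), r i ^ 2 ≤ ((τ h).card : ℝ) * S := by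
    have := Finset.sum_le_card_nsmul (τ h) (fun i => r i ^ 2) S
      (fun i hi => Finset.le_sup' (fun i => r i ^ 2) hi)
    rwa [nsmul_eq_mul] at this
  -- S ≥ 0
  have hS0 : 0 ≤ S := by
    rw [hS]
    exact le_trans (sq_nonneg (r (t h))) (Finset.le_sup' (fun i => r i ^ 2) (ht_mem h))
  -- main chain : card * β * D ≥ η * α * R
  have hchain : (η : ℝ) * α * R ≤ ((τ h).card : ℝ) * (β * D) := by
    have c1 : (η : ℝ) * (α * R) ≤ (η : ℝ) * (∑ i ∈ (τ h), r i ^ 2) :=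
      mul_le_mul_of_nonneg_left hlb (by positivity)
    have c2 : (η : ℝ) * (∑ i ∈ (τ h), r i ^ 2) ≤ (η : ℝ) * (((τ h).card : ℝ) * S) :=
      mul_le_mul_of_nonneg_left hτsum (by positivity)
    have c3 : ((τ h).card : ℝ) * ((η : ℝ) * S) ≤ ((τ h).card : ℝ) * (∑ i ∈ J, r i ^ 2) :=
      mul_le_mul_of_nonneg_left hJsum (by positivity)
    have c4 : ((τ h).card : ℝ) * (∑ i ∈ J, r i ^ 2) ≤ ((τ h).card : ℝ) * (β * D) :=
      mul_le_mul_of_nonneg_left hub (by positivity)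
    nlinarith
  -- finish
  rw [hpyth]
  have hq : (η : ℝ) * α / (((τ h).card : ℝ) * β) * R ≤ D := by
    rw [div_mul_eq_mul_div, div_le_iff₀ (by positivity)]
    nlinarith
  nlinarith
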